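/- For every real λ ≥ 1, the integral ∫₀^∞ r⁷ / ((1 + λ² r²)² (1 + r²)⁶) dr is at most 3/(8 λ⁴). -/

import Mathlib

/-! Since `(1 + λ²r²)² ≥ λ⁴r⁴`, the integrand is at most `λ⁻⁴ r³ / (1 + r²)⁶`, and
`∫₀^∞ r³ / (1 + r²)⁶ dr = 1/40`; hence the integral is at most `1 / (40 λ⁴) ≤ 3 / (8 λ⁴)`. -/

open MeasureTheory Set Filter Topology

lemma hasDerivAt_primitive_pow_three_div_one_add_sq_pow_six (r : ℝ) :
    HasDerivAt (fun x : ℝ => -(1 / 8) / (1 + x ^ 2) ^ 4 + (1 / 10) / (1 + x ^ 2) ^ 5)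
      (r ^ 3 / (1 + r ^ 2) ^ 6) r := by
  have hu : HasDerivAt (fun x : ℝ => 1 + x ^ 2) (2 * r) r := by
    simpa using (hasDerivAt_pow 2 r).const_add 1
  have h4 := (hasDerivAt_const r (-(1 / 8) : ℝ)).div (hu.fun_pow 4) (by positivity)
  have h5 := (hasDerivAt_const r (1 / 10 : ℝ)).div (hu.fun_pow 5) (by positivity)
  refine (h4.add h5).congr_deriv ?_
  field_simp
  ring

lemma tendsto_primitive_pow_three_div_one_add_sq_pow_six :
    Tendsto (fun x : ℝ => -(1 / 8) / (1 + x ^ 2) ^ 4 + (1 / 10) / (1 + x ^ 2) ^ 5)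
      atTop (𝓝 0) := by
  have hb : Tendsto (fun x : ℝ => 1 + x ^ 2) atTop atTop :=
    tendsto_atTop_add_const_left _ 1 (tendsto_pow_atTop two_ne_zero)
  have t4 := tendsto_const_nhds (x := (-(1 / 8) : ℝ)).div_atTop
    ((tendsto_pow_atTop (n := 4) (by norm_num)).comp hb)
  have t5 := tendsto_const_nhds (x := (1 / 10 : ℝ)).div_atTop
    ((tendsto_pow_atTop (n := 5) (by norm_num)).comp hb)
  simpa using t4.add t5

lemma integrableOn_and_integral_Ioi_pow_three_div_one_add_sq_pow_six :
    IntegrableOn (fun r : ℝ => r ^ 3 / (1 + r ^ 2) ^ 6) (Ioi 0) ∧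
      ∫ r in Ioi (0 : ℝ), r ^ 3 / (1 + r ^ 2) ^ 6 = 1 / 40 := by
  have hcont := (hasDerivAt_primitive_pow_three_div_one_add_sq_pow_six 0).continuousAt
  have hderiv : ∀ x ∈ Ioi (0 : ℝ), HasDerivAt _ _ x :=
    fun x _ => hasDerivAt_primitive_pow_three_div_one_add_sq_pow_six x
  have hnonneg : ∀ x ∈ Ioi (0 : ℝ), 0 ≤ x ^ 3 / (1 + x ^ 2) ^ 6 := fun x hx => by
    have : (0 : ℝ) < x := hx
    positivity
  refine ⟨integrableOn_Ioi_deriv_of_nonneg hcont.continuousWithinAt hderiv hnonneg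
    tendsto_primitive_pow_three_div_one_add_sq_pow_six, ?_⟩
  rw [integral_Ioi_of_hasDerivAt_of_nonneg hcont.continuousWithinAt hderiv hnonneg
    tendsto_primitive_pow_three_div_one_add_sq_pow_six]
  norm_num

lemma pow_seven_div_le_inv_pow_four_mul {l r : ℝ} (hl : l ≠ 0) (hr : 0 ≤ r) :
    r ^ 7 / ((1 + l ^ 2 * r ^ 2) ^ 2 * (1 + r ^ 2) ^ 6) ≤
      (l ^ 4)⁻¹ * (r ^ 3 / (1 + r ^ 2) ^ 6) := by
  have hl4 : 0 < l ^ 4 := by positivity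
  have hsq : l ^ 4 * r ^ 4 ≤ (1 + l ^ 2 * r ^ 2) ^ 2 := by nlinarith [sq_nonneg (l * r)]
  rw [inv_mul_eq_div, div_div, div_le_div_iff₀ (by positivity) (by positivity)]
  calc r ^ 7 * ((1 + r ^ 2) ^ 6 * l ^ 4) = r ^ 3 * (l ^ 4 * r ^ 4) * (1 + r ^ 2) ^ 6 := by ring
    _ ≤ r ^ 3 * (1 + l ^ 2 * r ^ 2) ^ 2 * (1 + r ^ 2) ^ 6 := by gcongr
    _ = r ^ 3 * ((1 + l ^ 2 * r ^ 2) ^ 2 * (1 + r ^ 2) ^ 6) := by ring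

theorem radial_integral_bound (l : ℝ) (hl : 1 ≤ l) :
    ∫ r in Set.Ioi (0 : ℝ), r ^ 7 / ((1 + l ^ 2 * r ^ 2) ^ 2 * (1 + r ^ 2) ^ 6) ≤
      3 / (8 * l ^ 4) := by
  obtain ⟨hint, hval⟩ := integrableOn_and_integral_Ioi_pow_three_div_one_add_sq_pow_six
  have hl0 : l ≠ 0 := by positivity
  calc ∫ r in Ioi (0 : ℝ), r ^ 7 / ((1 + l ^ 2 * r ^ 2) ^ 2 * (1 + r ^ 2) ^ 6)
      ≤ ∫ r in Ioi (0 : ℝ), (l ^ 4)⁻¹ * (r ^ 3 / (1 + r ^ 2) ^ 6) := by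
        refine integral_mono_of_nonneg ?_ (hint.const_mul _) ?_ <;>
          filter_upwards [ae_restrict_mem measurableSet_Ioi] with r (hr : 0 < r)
        · positivity
        · exact pow_seven_div_le_inv_pow_four_mul hl0 hr.le
    _ = (l ^ 4)⁻¹ * (1 / 40) := by rw [integral_const_mul, hval]
    _ ≤ 3 / (8 * l ^ 4) := by
        rw [inv_mul_eq_div, div_div, div_le_div_iff₀ (by positivity) (by positivity)]
        nlinarith [pow_pos (by positivity : 0 < l) 4]
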